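/- arXiv:1207.1794 — 5 statements merged into one kernel-verified Lean document; each statement's English description precedes it below -/
import Mathlib

section
/- For a multidimensional assignment problem with $s$ dimensions and $n \geq 2$ items, the size of the 2-opt neighborhood of any assignment $A$ is $|N_{2\text{-opt}}(A)| = 1 + \binom{n}{2}(2^{s-1} - 1)$. -/
/-- An assignment of the `s`-dimensional MAP of size `n`: `n` vectors (indexed by their first
coordinate position) whose coordinates are pairwise distinct in every dimension. -/
def MAPAssignment (n s : ℕ) : Type :=
  {A : Fin n → Fin s → Fin n // ∀ j : Fin s, Function.Injective (fun i => A i j)}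

/-- The 2-opt neighborhood of an assignment `A`: `A` itself together with all assignments
obtained by choosing two vectors of `A` and, independently for each of the dimensions other
than the first one, optionally swapping the coordinates of the two chosen vectors in that
dimension, such that both chosen vectors are modified. -/
def twoOptNbhd (n s : ℕ) (A : MAPAssignment n s) : Set (MAPAssignment n s) :=
  {B | B = A ∨
    ∃ p q : Fin n, p ≠ q ∧
      ∃ D : Finset (Fin s),
        (∀ j ∈ D, (j : ℕ) ≠ 0) ∧
        (∀ i : Fin n, i ≠ p → i ≠ q → B.1 i = A.1 i) ∧
        (∀ j ∈ D, B.1 p j = A.1 q j ∧ B.1 q j = A.1 p j) ∧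
        (∀ j ∉ D, B.1 p j = A.1 p j ∧ B.1 q j = A.1 q j) ∧
        B.1 p ≠ A.1 p ∧ B.1 q ≠ A.1 q}

/-!
A neighbour `B ≠ A` arises from a transposition of two distinct vectors `{p, q}` in a nonempty
set `D` of dimensions other than the first. Since the columns of `A` are injective, the move
can be read back off `B`: `{p, q}` is the set of vectors that change and `D` the set of
dimensions in which `p` changes. Hence the neighbourhood is `A` together with an injective image
of (pairs of distinct vectors) × (nonempty subsets of the `s - 1` later dimensions).
-/

open Finset

def Sym2.swap {α : Type*} [DecidableEq α] (e : Sym2 α) : Equiv.Perm α :=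
  Sym2.lift ⟨Equiv.swap, Equiv.swap_comm⟩ e

@[simp]
lemma Sym2.swap_mk {α : Type*} [DecidableEq α] (a b : α) : s(a, b).swap = Equiv.swap a b := rfl

lemma Sym2.swap_apply_eq_self_iff {α : Type*} [DecidableEq α] {e : Sym2 α} (he : ¬e.IsDiag)
    (x : α) : e.swap x = x ↔ x ∉ e := by
  induction e using Sym2.ind with
  | h a b =>
    rw [Sym2.mk_isDiag_iff] at he
    rw [Sym2.swap_mk, ← not_iff_not, not_not, ← ne_eq, Equiv.swap_apply_ne_self_iff, Sym2.mem_iff]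
    exact and_iff_right he

lemma Finset.card_nonempty_subtype_forall {α : Type*} [Fintype α] [DecidableEq α] (p : α → Prop)
    [DecidablePred p] :
    Nat.card {D : Finset α // D.Nonempty ∧ ∀ j ∈ D, p j} = 2 ^ #{j | p j} - 1 := by
  rw [← Nat.sub_zero #{j | p j}, ← card_empty (α := α),
    ← card_Ioc_finset (empty_subset _), Nat.card_eq_fintype_card]
  refine Fintype.card_of_subtype _ fun D => ?_
  simp [empty_ssubset, subset_iff]

lemma Fin.card_filter_val_ne_zero (s : ℕ) : #{j : Fin s | (j : ℕ) ≠ 0} = s - 1 := by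
  rcases s with _ | m
  · rfl
  · simp only [Fin.val_ne_zero_iff, filter_ne', mem_univ, card_erase_of_mem, card_univ,
      Fintype.card_fin]

namespace MAPAssignment

variable {n s : ℕ}

def permuteColumns (A : MAPAssignment n s) (σ : Fin s → Equiv.Perm (Fin n)) :
    MAPAssignment n s :=
  ⟨fun i j => A.1 (σ j i) j, fun j => (A.2 j).comp (σ j).injective⟩

def twoOptSwap (A : MAPAssignment n s) (e : Sym2 (Fin n)) (D : Finset (Fin s)) :
    MAPAssignment n s :=
  A.permuteColumns fun j => if j ∈ D then e.swap else 1

lemma twoOptSwap_apply (A : MAPAssignment n s) (e : Sym2 (Fin n)) (D : Finset (Fin s))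
    (i : Fin n) (j : Fin s) :
    (A.twoOptSwap e D).1 i j = if j ∈ D then A.1 (e.swap i) j else A.1 i j := by
  change A.1 ((if j ∈ D then e.swap else 1) i) j = _
  split_ifs <;> rfl

lemma twoOptSwap_apply_eq_self_iff (A : MAPAssignment n s) {e : Sym2 (Fin n)} (he : ¬e.IsDiag)
    (D : Finset (Fin s)) (i : Fin n) (j : Fin s) :
    (A.twoOptSwap e D).1 i j = A.1 i j ↔ (i ∈ e → j ∉ D) := by
  by_cases hj : j ∈ D <;>
    simp [twoOptSwap_apply, hj, (A.2 j).eq_iff, Sym2.swap_apply_eq_self_iff he]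

/-- A 2-opt move other than the identity: the unordered pair of exchanged vectors and the
nonempty set of dimensions, none of them the first, in which their entries are swapped. -/
abbrev TwoOptMove (n s : ℕ) : Type :=
  {e : Sym2 (Fin n) // ¬e.IsDiag} × {D : Finset (Fin s) // D.Nonempty ∧ ∀ j ∈ D, (j : ℕ) ≠ 0}

def applyMove (A : MAPAssignment n s) (m : TwoOptMove n s) : MAPAssignment n s :=
  A.twoOptSwap m.1.1 m.2.1

lemma applyMove_ne (A : MAPAssignment n s) (m : TwoOptMove n s) : A.applyMove m ≠ A := by
  obtain ⟨⟨e, he⟩, ⟨D, ⟨j, hj⟩, -⟩⟩ := m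
  intro h
  have h' : (A.twoOptSwap e D).1 e.out.1 j = A.1 e.out.1 j := congrArg (fun B => B.1 e.out.1 j) h
  exact (A.twoOptSwap_apply_eq_self_iff he D _ j).1 h' e.out_fst_mem hj

lemma applyMove_injective (A : MAPAssignment n s) : Function.Injective A.applyMove := by
  rintro ⟨⟨e, he⟩, ⟨D, hD, _⟩⟩ ⟨⟨e', he'⟩, ⟨D', hD', _⟩⟩ h
  have key (i : Fin n) (j : Fin s) : (i ∈ e → j ∉ D) ↔ (i ∈ e' → j ∉ D') := by
    rw [← A.twoOptSwap_apply_eq_self_iff he, ← A.twoOptSwap_apply_eq_self_iff he']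
    exact Iff.of_eq (congrArg (fun B : MAPAssignment n s => B.1 i j = A.1 i j) h)
  obtain rfl : e = e' := Sym2.ext fun i => by
    have h := (forall_congr' (key i)).not
    simp only [not_forall, not_not, exists_prop, exists_and_left] at h
    exact (and_iff_left hD).symm.trans (h.trans (and_iff_left hD'))
  obtain rfl : D = D' := Finset.ext fun j => by
    simpa [e.out_fst_mem] using (key e.out.1 j).not
  rfl

lemma applyMove_mem_twoOptNbhd (A : MAPAssignment n s) (m : TwoOptMove n s) :
    A.applyMove m ∈ twoOptNbhd n s A := by
  obtain ⟨⟨e, he⟩, ⟨D, ⟨j₀, hj₀⟩, hD0⟩⟩ := m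
  induction e using Sym2.ind with
  | h p q =>
    have hpq : p ≠ q := Sym2.mk_isDiag_iff.not.1 he
    have row_ne {i : Fin n} (hi : i ∈ s(p, q)) : (A.twoOptSwap s(p, q) D).1 i ≠ A.1 i :=
      fun h => (A.twoOptSwap_apply_eq_self_iff he D i j₀).1 (congrFun h j₀) hi hj₀
    refine Or.inr ⟨p, q, hpq, D, hD0, fun i hip hiq => ?_, fun j hj => ?_, fun j hj => ?_,
      row_ne (Sym2.mem_mk_left p q), row_ne (Sym2.mem_mk_right p q)⟩
    · funext j
      exact (A.twoOptSwap_apply_eq_self_iff he D i j).2 fun hi => absurd hi (by simp [hip, hiq])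
    · simp [applyMove, twoOptSwap_apply, hj]
    · simp [applyMove, twoOptSwap_apply, hj]

lemma mem_range_applyMove_of_mem_twoOptNbhd (A B : MAPAssignment n s)
    (hB : B ∈ twoOptNbhd n s A) (hBA : B ≠ A) : B ∈ Set.range A.applyMove := by
  obtain ⟨p, q, hpq, D, hD0, hother, hswap, hkeep, hBp, -⟩ := hB.resolve_left hBA
  have hD : D.Nonempty := by
    by_contra! hD
    exact hBp (funext fun j => (hkeep j (by simp [hD])).1)
  refine ⟨⟨⟨s(p, q), Sym2.mk_isDiag_iff.not.2 hpq⟩, ⟨D, hD, hD0⟩⟩, Subtype.ext ?_⟩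
  funext i j
  rw [applyMove, twoOptSwap_apply, Sym2.swap_mk]
  by_cases hj : j ∈ D
  · rw [if_pos hj]
    rcases eq_or_ne i p with rfl | hip
    · rw [Equiv.swap_apply_left, (hswap j hj).1]
    rcases eq_or_ne i q with rfl | hiq
    · rw [Equiv.swap_apply_right, (hswap j hj).2]
    · rw [Equiv.swap_apply_of_ne_of_ne hip hiq, hother i hip hiq]
  · rw [if_neg hj]
    rcases eq_or_ne i p with rfl | hip
    · exact (hkeep j hj).1.symm
    rcases eq_or_ne i q with rfl | hiq
    · exact (hkeep j hj).2.symm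
    · rw [hother i hip hiq]

lemma twoOptNbhd_eq_insert_range (A : MAPAssignment n s) :
    twoOptNbhd n s A = insert A (Set.range A.applyMove) := by
  ext B
  refine ⟨fun hB => ?_, ?_⟩
  · by_cases hBA : B = A
    · exact Or.inl hBA
    · exact Or.inr (A.mem_range_applyMove_of_mem_twoOptNbhd B hB hBA)
  · rintro (rfl | ⟨m, rfl⟩)
    · exact Or.inl rfl
    · exact A.applyMove_mem_twoOptNbhd m

end MAPAssignment

theorem card_twoOptNbhd_general (n s : ℕ) (A : MAPAssignment n s) :
    Nat.card ↥(twoOptNbhd n s A) = 1 + n.choose 2 * (2 ^ (s - 1) - 1) := by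
  have card_pairs : Nat.card {e : Sym2 (Fin n) // ¬e.IsDiag} = n.choose 2 := by
    rw [Nat.card_eq_fintype_card, Sym2.card_subtype_not_diag, Fintype.card_fin]
  have card_dims : Nat.card {D : Finset (Fin s) // D.Nonempty ∧ ∀ j ∈ D, (j : ℕ) ≠ 0} =
      2 ^ (s - 1) - 1 := by
    rw [Finset.card_nonempty_subtype_forall, Fin.card_filter_val_ne_zero]
  have hA : A ∉ Set.range A.applyMove := fun ⟨m, hm⟩ => A.applyMove_ne m hm
  rw [A.twoOptNbhd_eq_insert_range, Nat.card_coe_set_eq, Set.ncard_insert_of_notMem hA,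
    Set.ncard_range_of_injective A.applyMove_injective, Nat.card_prod, card_pairs, card_dims,
    add_comm]

/-- The size of the 2-opt neighborhood of any assignment of the `s`-dimensional MAP with
`n ≥ 2` items is `1 + C(n,2)(2^(s-1) - 1)`. -/
theorem card_twoOptNbhd (n s : ℕ) (hn : 2 ≤ n) (A : MAPAssignment n s) :
    Nat.card ↥(twoOptNbhd n s A) = 1 + n.choose 2 * (2 ^ (s - 1) - 1) :=
  card_twoOptNbhd_general n s A
end

section
/- In the $s$-dimensional MAP, the neighborhood of the combined heuristic $sDV+2\text{-opt}$ equals the neighborhood of $sDV$ alone: $N_{sDV}(A) \cup N_{2\text{-opt}}(A) = N_{sDV}(A)$, i.e., $N_{2\text{-opt}}(A) \subseteq N_{sDV}(A)$ for every assignment $A$. -/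
/-- The assignment `p_D(A, ρ)` in permutation form: the permutation `ρ` is applied (on indices)
to the coordinates in every dimension `j ∈ D`. -/
def pDim {n s : ℕ} (A : Fin s → Equiv.Perm (Fin n)) (D : Finset (Fin s))
    (ρ : Equiv.Perm (Fin n)) : Fin s → Equiv.Perm (Fin n) :=
  fun j => if j ∈ D then A j * ρ else A j

/-- The set of vectors represented by an assignment in permutation form. -/
def toVectors {n s : ℕ} (A : Fin s → Equiv.Perm (Fin n)) : Set (Fin s → Fin n) :=
  {v | ∃ i : Fin n, ∀ j : Fin s, v j = A j i}

/-- `N_sDV(A) = {p_D(A,ρ) : ∅ ≠ D ⊊ {1,…,s}, ρ a permutation}`. -/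
def sDVNbhd {n s : ℕ} (A : Fin s → Equiv.Perm (Fin n)) : Set (Set (Fin s → Fin n)) :=
  {S | ∃ D : Finset (Fin s), D ≠ ∅ ∧ D ≠ Finset.univ ∧
    ∃ ρ : Equiv.Perm (Fin n), S = toVectors (pDim A D ρ)}

/-- `N_2opt(A) = {p_D(A,ρ) : D ⊆ {2,…,s}, ρ swaps at most two elements}`. -/
def twoOptNbhdP {n s : ℕ} (A : Fin s → Equiv.Perm (Fin n)) : Set (Set (Fin s → Fin n)) :=
  {S | ∃ D : Finset (Fin s), (∀ j ∈ D, (j : ℕ) ≠ 0) ∧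
    ∃ ρ : Equiv.Perm (Fin n), ρ.support.card ≤ 2 ∧ S = toVectors (pDim A D ρ)}

/-- The neighborhood of the combined heuristic `sDV + 2-opt` equals the neighborhood of `sDV`
alone: `N_sDV(A) ∪ N_2opt(A) = N_sDV(A)`, i.e. `N_2opt(A) ⊆ N_sDV(A)`. -/
theorem sDV_absorbs_twoOpt {n s : ℕ} (hs : 2 ≤ s) (A : Fin s → Equiv.Perm (Fin n)) :
    sDVNbhd A ∪ twoOptNbhdP A = sDVNbhd A ∧ twoOptNbhdP A ⊆ sDVNbhd A := by
  have z : Fin s := ⟨0, by omega⟩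
  have o : Fin s := ⟨1, by omega⟩
  have hsub : twoOptNbhdP A ⊆ sDVNbhd A := by
    rintro S ⟨D, hD, ρ, hcard, rfl⟩
    by_cases hDe : D = ∅
    · refine ⟨{⟨0, by omega⟩}, by simp, ?_, 1, ?_⟩
      · intro h
        have h1 : (⟨1, by omega⟩ : Fin s) ∈ ({(⟨0, by omega⟩ : Fin s)} : Finset (Fin s)) := by
          rw [h]; exact Finset.mem_univ _
        simp [Fin.ext_iff] at h1
      · have he : pDim A D ρ = pDim A {(⟨0, by omega⟩ : Fin s)} 1 := by
          funext j
          simp only [pDim, hDe, Finset.notMem_empty, if_false]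
          split <;> simp
        rw [he]
    · refine ⟨D, hDe, ?_, ρ, rfl⟩
      intro h
      have := hD ⟨0, by omega⟩ (h ▸ Finset.mem_univ _)
      simp at this
  exact ⟨Set.union_eq_left.mpr hsub, hsub⟩
end

section
/- There exists a symmetric GTSP instance and a tour $T$ in it such that $T$ is simultaneously a local (in fact global) minimum over all cluster-order rearrangements with its vertex selection fixed and a global minimum over all vertex re-selections with its cluster order fixed, yet $T$ is a longest (worst) GTSP tour and is strictly heavier than the optimal tour. -/
/-- The weight of the cyclic tour `T_0 → T_1 → ⋯ → T_{m-1} → T_0`. -/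
def cycleWeight {α : Type*} (m : ℕ) (w : α → α → ℝ) (T : ℕ → α) : ℝ :=
  ∑ i ∈ Finset.range m, w (T i) (T ((i + 1) % m))

/-- Nat-valued weights on 6 vertices: 0=v₁, 1=v₂, 2=v₂', 3=v₃, 4=v₄, 5=v₅.
All edges incident to vertex 1 have weight 1; edges {0,2} and {2,3} have weight 1;
all other edges have weight 0. -/
def Wn : Fin 6 → Fin 6 → ℕ := fun a b =>
  (if a = 1 then 1 else 0) + (if b = 1 then 1 else 0) +
  (if (a = 0 ∧ b = 2) ∨ (a = 2 ∧ b = 0) then 1 else 0) +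
  (if (a = 2 ∧ b = 3) ∨ (a = 3 ∧ b = 2) then 1 else 0)

/-- Real-valued weight function. -/
def wR : Fin 6 → Fin 6 → ℝ := fun a b => (Wn a b : ℝ)

/-- Cluster assignment: vertices 1 and 2 share cluster 1, others are singletons. -/
def clF : Fin 6 → Fin 5 := ![0, 1, 1, 2, 3, 4]

/-- The bad tour: 0 → 1 → 3 → 4 → 5 → 0. -/
def TN : ℕ → Fin 6 := fun i =>
  if i = 0 then 0 else if i = 1 then 1 else if i = 2 then 3 else
  if i = 3 then 4 else if i = 4 then 5 else 0

/-- The good tour: 0 → 2 → 4 → 3 → 5 → 0. -/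
def T0N : ℕ → Fin 6 := fun i =>
  if i = 0 then 0 else if i = 1 then 2 else if i = 2 then 4 else
  if i = 3 then 3 else if i = 4 then 5 else 0

lemma cycleWeight_eq (T' : ℕ → Fin 6) :
    cycleWeight 5 wR T' = ((Wn (T' 0) (T' 1) + Wn (T' 1) (T' 2) + Wn (T' 2) (T' 3) +
      Wn (T' 3) (T' 4) + Wn (T' 4) (T' 0) : ℕ) : ℝ) := by
  simp [cycleWeight, Finset.sum_range_succ, wR]
  try push_cast
  try ring

set_option maxRecDepth 100000 in
set_option synthInstance.maxSize 2000 in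
set_option synthInstance.maxHeartbeats 1000000 in
/-- Any valid tour has weight at most 2. -/
lemma L1 : ∀ a b c d e : Fin 6,
    (clF a ≠ clF b ∧ clF a ≠ clF c ∧ clF a ≠ clF d ∧ clF a ≠ clF e ∧
     clF b ≠ clF c ∧ clF b ≠ clF d ∧ clF b ≠ clF e ∧
     clF c ≠ clF d ∧ clF c ≠ clF e ∧ clF d ≠ clF e) →
    Wn a b + Wn b c + Wn c d + Wn d e + Wn e a ≤ 2 := by decide

set_option maxRecDepth 100000 in
set_option synthInstance.maxSize 2000 in
set_option synthInstance.maxHeartbeats 1000000 in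
/-- Any tour with the cluster order of `TN` has weight at least 2. -/
lemma L2 : ∀ a b c d e : Fin 6,
    (clF a = 0 ∧ clF b = 1 ∧ clF c = 2 ∧ clF d = 3 ∧ clF e = 4) →
    2 ≤ Wn a b + Wn b c + Wn c d + Wn d e + Wn e a := by decide

set_option maxRecDepth 100000 in
set_option synthInstance.maxSize 2000 in
set_option synthInstance.maxHeartbeats 1000000 in
/-- Any tour on the vertex set {0,1,3,4,5} has weight at least 2. -/
lemma L3 : ∀ a b c d e : Fin 6,
    ((a ≠ b ∧ a ≠ c ∧ a ≠ d ∧ a ≠ e ∧ b ≠ c ∧ b ≠ d ∧ b ≠ e ∧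
     c ≠ d ∧ c ≠ e ∧ d ≠ e) ∧
    (a ≠ 2 ∧ b ≠ 2 ∧ c ≠ 2 ∧ d ≠ 2 ∧ e ≠ 2)) →
    2 ≤ Wn a b + Wn b c + Wn c d + Wn d e + Wn e a := by decide

lemma TN_cl_inj : ∀ i < 5, ∀ j < 5, clF (TN i) = clF (TN j) → i = j := by decide
lemma T0N_cl_inj : ∀ i < 5, ∀ j < 5, clF (T0N i) = clF (T0N j) → i = j := by decide
lemma TN_cl_surj : ∀ c : Fin 5, ∃ i, i < 5 ∧ clF (TN i) = c := by decide
lemma T0N_cl_surj : ∀ c : Fin 5, ∃ i, i < 5 ∧ clF (T0N i) = c := by decide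
lemma TN_inj : ∀ i < 5, ∀ j < 5, TN i = TN j → i = j := by decide
lemma TN_ne2 : ∀ i < 5, TN i ≠ 2 := by decide

lemma unique_of (T' : ℕ → Fin 6)
    (hs : ∀ c : Fin 5, ∃ i, i < 5 ∧ clF (T' i) = c)
    (hi : ∀ i < 5, ∀ j < 5, clF (T' i) = clF (T' j) → i = j) :
    ∀ c : Fin 5, ∃! i : ℕ, i < 5 ∧ clF (T' i) = c := by
  intro c
  obtain ⟨i, hi5, hci⟩ := hs c
  exact ⟨i, ⟨hi5, hci⟩, fun j ⟨hj5, hcj⟩ => hi j hj5 i hi5 (hcj.trans hci.symm)⟩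

/-- There exists a symmetric GTSP instance (a weighted complete graph on `n` vertices whose
vertices are assigned to `m` clusters by `cl`) and a tour `T` (visiting every cluster exactly
once) such that `T` is a global minimum over all reorderings of its vertices (`N_TSP`), a
global minimum over all re-selections of vertices keeping the cluster order (`N_CO`), yet `T`
is a longest GTSP tour and strictly heavier than an optimal tour. -/
theorem gtsp_worst_tour_local_min :
    ∃ (n m : ℕ) (w : Fin n → Fin n → ℝ) (cl : Fin n → Fin m) (T : ℕ → Fin n),
      (∀ a b, w a b = w b a) ∧
      (∀ c : Fin m, ∃! i : ℕ, i < m ∧ cl (T i) = c) ∧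
      (∀ T' : ℕ → Fin n,
        (∃ σ : Equiv.Perm ℕ, (∀ i < m, σ i < m) ∧ ∀ i, T' i = T (σ i)) →
        cycleWeight m w T ≤ cycleWeight m w T') ∧
      (∀ T' : ℕ → Fin n, (∀ i < m, cl (T' i) = cl (T i)) →
        cycleWeight m w T ≤ cycleWeight m w T') ∧
      (∀ T' : ℕ → Fin n, (∀ c : Fin m, ∃! i : ℕ, i < m ∧ cl (T' i) = c) →
        cycleWeight m w T' ≤ cycleWeight m w T) ∧
      (∃ T₀ : ℕ → Fin n, (∀ c : Fin m, ∃! i : ℕ, i < m ∧ cl (T₀ i) = c) ∧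
        cycleWeight m w T₀ < cycleWeight m w T) := by
  refine ⟨6, 5, wR, clF, TN, ?_, ?_, ?_, ?_, ?_, ?_⟩
  · -- symmetry
    have h : ∀ a b : Fin 6, Wn a b = Wn b a := by decide
    intro a b
    simp only [wR, h a b]
  · -- TN is a valid tour
    exact unique_of TN TN_cl_surj TN_cl_inj
  · -- N_TSP global minimum
    rintro T' ⟨σ, hσ, hT'⟩
    have hne : ∀ i < 5, T' i ≠ 2 := fun i hi => by
      rw [hT' i]; exact TN_ne2 (σ i) (hσ i hi)
    have hd : ∀ i < 5, ∀ j < 5, i ≠ j → T' i ≠ T' j := by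
      intro i hi j hj hij h
      rw [hT' i, hT' j] at h
      exact hij (σ.injective (TN_inj (σ i) (hσ i hi) (σ j) (hσ j hj) h))
    rw [cycleWeight_eq, cycleWeight_eq]
    have h2 : Wn (TN 0) (TN 1) + Wn (TN 1) (TN 2) + Wn (TN 2) (TN 3) +
        Wn (TN 3) (TN 4) + Wn (TN 4) (TN 0) = 2 := by decide
    rw [h2]
    exact_mod_cast L3 (T' 0) (T' 1) (T' 2) (T' 3) (T' 4)
      ⟨⟨hd 0 (by norm_num) 1 (by norm_num) (by norm_num),
       hd 0 (by norm_num) 2 (by norm_num) (by norm_num),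
       hd 0 (by norm_num) 3 (by norm_num) (by norm_num),
       hd 0 (by norm_num) 4 (by norm_num) (by norm_num),
       hd 1 (by norm_num) 2 (by norm_num) (by norm_num),
       hd 1 (by norm_num) 3 (by norm_num) (by norm_num),
       hd 1 (by norm_num) 4 (by norm_num) (by norm_num),
       hd 2 (by norm_num) 3 (by norm_num) (by norm_num),
       hd 2 (by norm_num) 4 (by norm_num) (by norm_num),
       hd 3 (by norm_num) 4 (by norm_num) (by norm_num)⟩,
      ⟨hne 0 (by norm_num), hne 1 (by norm_num), hne 2 (by norm_num),
       hne 3 (by norm_num), hne 4 (by norm_num)⟩⟩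
  · -- N_CO global minimum
    intro T' hco
    rw [cycleWeight_eq, cycleWeight_eq]
    have h2 : Wn (TN 0) (TN 1) + Wn (TN 1) (TN 2) + Wn (TN 2) (TN 3) +
        Wn (TN 3) (TN 4) + Wn (TN 4) (TN 0) = 2 := by decide
    rw [h2]
    exact_mod_cast L2 (T' 0) (T' 1) (T' 2) (T' 3) (T' 4)
      ⟨hco 0 (by norm_num), hco 1 (by norm_num), hco 2 (by norm_num),
       hco 3 (by norm_num), hco 4 (by norm_num)⟩
  · -- TN is a longest tour
    intro T' hu
    have hd : ∀ i < 5, ∀ j < 5, i ≠ j → clF (T' i) ≠ clF (T' j) := by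
      intro i hi j hj hij h
      obtain ⟨k, _, hk⟩ := hu (clF (T' j))
      exact hij ((hk i ⟨hi, h⟩).trans (hk j ⟨hj, rfl⟩).symm)
    rw [cycleWeight_eq, cycleWeight_eq]
    have h2 : Wn (TN 0) (TN 1) + Wn (TN 1) (TN 2) + Wn (TN 2) (TN 3) +
        Wn (TN 3) (TN 4) + Wn (TN 4) (TN 0) = 2 := by decide
    rw [h2]
    exact_mod_cast L1 (T' 0) (T' 1) (T' 2) (T' 3) (T' 4)
      ⟨hd 0 (by norm_num) 1 (by norm_num) (by norm_num),
       hd 0 (by norm_num) 2 (by norm_num) (by norm_num),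
       hd 0 (by norm_num) 3 (by norm_num) (by norm_num),
       hd 0 (by norm_num) 4 (by norm_num) (by norm_num),
       hd 1 (by norm_num) 2 (by norm_num) (by norm_num),
       hd 1 (by norm_num) 3 (by norm_num) (by norm_num),
       hd 1 (by norm_num) 4 (by norm_num) (by norm_num),
       hd 2 (by norm_num) 3 (by norm_num) (by norm_num),
       hd 2 (by norm_num) 4 (by norm_num) (by norm_num),
       hd 3 (by norm_num) 4 (by norm_num) (by norm_num)⟩
  · -- the optimal tour is strictly better
    refine ⟨T0N, unique_of T0N T0N_cl_surj T0N_cl_inj, ?_⟩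
    rw [cycleWeight_eq, cycleWeight_eq]
    norm_cast
end

section
/- Let $k \leq m/2$ and for each $i \in \{1, \dots, m\}$ (indices modulo $m$) let $\Phi_i^k(T)$ be the set of tours obtained from tour $T$ by rearranging and re-selecting only the vertices at positions $i+1, \dots, i+k$, and let $A_i^k(T) = \{T' \in \Phi_i^k(T) : T'_{i+1} \neq T_{i+1}\}$. Then the sets $A_1^k(T), \dots, A_m^k(T)$ are pairwise disjoint and $\{T\} \cup \bigcup_{i=1}^m A_i^k(T) = \bigcup_{i=1}^m \Phi_i^k(T)$. -/
/-- The window of `k` cyclic positions `i+1, …, i+k`. -/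
def foWindow (m k : ℕ) (i : ZMod m) : Finset (ZMod m) :=
  (Finset.range k).image fun t : ℕ => i + 1 + (t : ZMod m)

/-- `Φ_i^k(T)`: the tours agreeing with `T` outside the window `{i+1, …, i+k}` and visiting,
within the window, the same clusters (in arbitrary order, with arbitrary vertex re-selections
within those clusters). -/
def foPhi {V C : Type*} [DecidableEq C] (m k : ℕ) (cl : V → C) (T : ZMod m → V)
    (i : ZMod m) : Set (ZMod m → V) :=
  {T' | (∀ j, j ∉ foWindow m k i → T' j = T j) ∧
    (foWindow m k i).image (cl ∘ T') = (foWindow m k i).image (cl ∘ T)}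

/-- `A_i^k(T)`: the tours of `Φ_i^k(T)` whose vertex at position `i+1` differs from `T`'s. -/
def foA {V C : Type*} [DecidableEq C] (m k : ℕ) (cl : V → C) (T : ZMod m → V)
    (i : ZMod m) : Set (ZMod m → V) :=
  {T' ∈ foPhi m k cl T i | T' (i + 1) ≠ T (i + 1)}

/-!
If `T' ∈ Φ_i^k(T)` differs from `T`, let `i + 1 + t₀` be the first position of the window where
they differ. Shifting the window by `t₀` gives `T' ∈ A_{i+t₀}^k(T)`: the positions leaving the
window agree by minimality of `t₀`, those entering it lie outside the old window, and since the
clusters of `T` are distinct, the clusters visited on the overlap are forced. Conversely, a tour in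
`A_i ∩ A_j` forces `i + 1 ∈ W_j` and `j + 1 ∈ W_i`, i.e. offsets `s, t < k` with `s + t ≡ 0`
modulo `m`; as `s + t < 2k ≤ m`, this means `i = j`.
-/

open Set

namespace Finset

variable {α β : Type*} [DecidableEq α] [DecidableEq β] {f g : α → β}

theorem image_sdiff_eq_of_eqOn {W S : Finset α} (hW : W.image f = W.image g)
    (hg : InjOn g W) (hS : EqOn f g S) : (W \ S).image f = (W \ S).image g := by
  have hsub : (W \ S).image g ⊆ (W \ S).image f := by
    intro x hx
    obtain ⟨a, ha, rfl⟩ := mem_image.1 hx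
    obtain ⟨b, hbW, hb⟩ := mem_image.1 (hW ▸ mem_image_of_mem g (sdiff_subset ha))
    have hbS : b ∉ S := by
      intro hbS
      rw [hS hbS] at hb
      exact (mem_sdiff.1 ha).2 (hg hbW (sdiff_subset ha) hb ▸ hbS)
    exact mem_image.2 ⟨b, mem_sdiff.2 ⟨hbW, hbS⟩, hb⟩
  refine (eq_of_subset_of_card_le hsub ?_).symm
  rw [card_image_of_injOn (hg.mono (coe_subset.2 sdiff_subset))]
  exact card_image_le

theorem image_eq_image_of_eqOn_sdiff {W W' : Finset α} (hW : W.image f = W.image g)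
    (hg : InjOn g W) (hout : EqOn f g ↑(W \ W')) (hin : EqOn f g ↑(W' \ W)) :
    W'.image f = W'.image g := by
  have hinter : (W' ∩ W).image f = (W' ∩ W).image g := by
    rw [inter_comm, ← sdiff_sdiff_self_left]
    exact image_sdiff_eq_of_eqOn hW hg hout
  rw [← sdiff_union_inter W' W, image_union, image_union, hinter, image_congr hin]

end Finset

section FragmentOptimization

variable {V C : Type*} [DecidableEq C] {m k : ℕ} {cl : V → C} {T T' : ZMod m → V}
  {i j : ZMod m}

theorem mem_foWindow : j ∈ foWindow m k i ↔ ∃ t < k, i + 1 + t = j := by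
  simp [foWindow]

theorem eq_of_succ_mem_foWindow_of_succ_mem_foWindow (hk : 2 * k ≤ m)
    (hi : i + 1 ∈ foWindow m k j) (hj : j + 1 ∈ foWindow m k i) : i = j := by
  obtain ⟨t, ht, hti⟩ := mem_foWindow.1 hi
  obtain ⟨s, hs, hsj⟩ := mem_foWindow.1 hj
  have hdvd : m ∣ s + t := by
    rw [← ZMod.natCast_eq_zero_iff]
    push_cast
    linear_combination hti + hsj
  obtain rfl : t = 0 := by
    have := Nat.eq_zero_of_dvd_of_lt hdvd (by omega)
    omega
  simpa using hti.symm

theorem succ_mem_foWindow_of_mem_foA_of_mem_foPhi (hA : T' ∈ foA m k cl T i)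
    (hΦ : T' ∈ foPhi m k cl T j) : i + 1 ∈ foWindow m k j := by
  by_contra h
  exact hA.2 (hΦ.1 _ h)

theorem disjoint_foA (hk : 2 * k ≤ m) (hij : i ≠ j) :
    Disjoint (foA m k cl T i) (foA m k cl T j) :=
  Set.disjoint_left.2 fun _ hi hj => hij <| eq_of_succ_mem_foWindow_of_succ_mem_foWindow hk
    (succ_mem_foWindow_of_mem_foA_of_mem_foPhi hi hj.1)
    (succ_mem_foWindow_of_mem_foA_of_mem_foPhi hj hi.1)

theorem eqOn_foWindow_sdiff_foWindow_add {t₀ : ℕ}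
    (hmin : ∀ s < t₀, T' (i + 1 + s) = T (i + 1 + s)) :
    EqOn T' T ↑(foWindow m k i \ foWindow m k (i + t₀)) := by
  intro j hj
  obtain ⟨hjW, hjW'⟩ := Finset.mem_sdiff.1 hj
  obtain ⟨v, hv, rfl⟩ := mem_foWindow.1 hjW
  refine hmin v (not_le.1 fun hle => hjW' (mem_foWindow.2 ⟨v - t₀, by omega, ?_⟩))
  push_cast [hle]
  ring

theorem self_mem_foPhi : T ∈ foPhi m k cl T i :=
  ⟨fun _ _ => rfl, rfl⟩

theorem mem_foPhi_add_of_eqOn {t₀ : ℕ} (hΦ : T' ∈ foPhi m k cl T i)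
    (hinj : InjOn (cl ∘ T) (foWindow m k i))
    (hmin : ∀ s < t₀, T' (i + 1 + s) = T (i + 1 + s)) :
    T' ∈ foPhi m k cl T (i + t₀) := by
  have hleave := eqOn_foWindow_sdiff_foWindow_add (k := k) hmin
  refine ⟨fun j hj => ?_, Finset.image_eq_image_of_eqOn_sdiff hΦ.2 hinj
    (fun _ hj => congrArg cl (hleave hj))
    (fun _ hj => congrArg cl (hΦ.1 _ (Finset.mem_sdiff.1 hj).2))⟩
  by_cases hjW : j ∈ foWindow m k i
  · exact hleave (Finset.mem_sdiff.2 ⟨hjW, hj⟩)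
  · exact hΦ.1 j hjW

theorem exists_mem_foA_of_mem_foPhi (hinj : InjOn (cl ∘ T) (foWindow m k i))
    (hΦ : T' ∈ foPhi m k cl T i) (hne : T' ≠ T) : ∃ j, T' ∈ foA m k cl T j := by
  classical
  have hex : ∃ t, t < k ∧ T' (i + 1 + t) ≠ T (i + 1 + t) := by
    obtain ⟨j, hj⟩ := Function.ne_iff.1 hne
    obtain ⟨t, ht, rfl⟩ := mem_foWindow.1 (not_imp_comm.1 (hΦ.1 j) hj)
    exact ⟨t, ht, hj⟩
  refine ⟨i + Nat.find hex, mem_foPhi_add_of_eqOn hΦ hinj fun s hs => ?_, ?_⟩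
  · by_contra h
    exact Nat.find_min hex hs ⟨hs.trans (Nat.find_spec hex).1, h⟩
  · rw [add_right_comm]
    exact (Nat.find_spec hex).2

end FragmentOptimization

theorem fragment_opt_partition_general {V C : Type*} [DecidableEq C] (m k : ℕ)
    (hk : 2 * k ≤ m) (cl : V → C) (T : ZMod m → V)
    (hinj : Function.Injective (cl ∘ T)) :
    (∀ i j : ZMod m, i ≠ j → Disjoint (foA m k cl T i) (foA m k cl T j)) ∧
    ({T} ∪ ⋃ i : ZMod m, foA m k cl T i) = ⋃ i : ZMod m, foPhi m k cl T i := by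
  refine ⟨fun i j => disjoint_foA hk, ?_⟩
  ext T'
  simp only [mem_union, mem_singleton_iff, mem_iUnion]
  constructor
  · rintro (rfl | ⟨i, hA⟩)
    · exact ⟨0, self_mem_foPhi⟩
    · exact ⟨i, hA.1⟩
  · rintro ⟨i, hΦ⟩
    exact (eq_or_ne T' T).imp id (exists_mem_foA_of_mem_foPhi hinj.injOn hΦ)

/-- For `k ≤ m/2`, the sets `A_1^k(T), …, A_m^k(T)` are pairwise disjoint and
`{T} ∪ ⋃_i A_i^k(T) = ⋃_i Φ_i^k(T)`. -/
theorem fragment_opt_partition {V C : Type*} [DecidableEq C] (m k : ℕ)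
    (hm : 0 < m) (hk : 2 * k ≤ m) (cl : V → C) (T : ZMod m → V)
    (hinj : Function.Injective (cl ∘ T)) :
    (∀ i j : ZMod m, i ≠ j → Disjoint (foA m k cl T i) (foA m k cl T j)) ∧
    ({T} ∪ ⋃ i : ZMod m, foA m k cl T i) = ⋃ i : ZMod m, foPhi m k cl T i :=
  fragment_opt_partition_general m k hk cl T hinj
end

section
/- Fix integers $n \geq 1$, $s \geq 2$, $0 \leq k \leq n$, and a reference assignment $(f^1, \dots, f^n)$ of the $s$-dimensional MAP of size $n$ with $f^i_1 = i$. Let $h(n,k)$ be the number of assignments $(e^1, \dots, e^n)$ with $e^i_1 = i$ for all $i$, $e^j = f^j$ for all $j \leq k$, and $e^j \neq f^j$ for all $j > k$. Then $h(n,k) \leq ((n-k)!)^{s-1}$ and $h(n,k) \geq ((n-k)!)^{s-1} - (n-k) \cdot ((n-k-1)!)^{s-1}$. -/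
/-- The set counted by `h(n,k)`: assignments `e` of the `s`-dimensional MAP of size `n` (with
first coordinates fixed to the identity) that coincide with the reference assignment `f` on
the first `k` vectors and differ from it on every later vector. -/
def hSet (n s k : ℕ) (f : Fin n → Fin s → Fin n) : Set (Fin n → Fin s → Fin n) :=
  {e | (∀ i : Fin n, ∀ j : Fin s, (j : ℕ) = 0 → e i j = i) ∧
       (∀ j : Fin s, Function.Injective (fun i => e i j)) ∧
       (∀ i : Fin n, (i : ℕ) < k → e i = f i) ∧
       (∀ i : Fin n, k ≤ (i : ℕ) → e i ≠ f i)}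

/-!
Once the vectors indexed by `S` are fixed, each of the `s - 1` free coordinates of an assignment
is an independent permutation of `n` values with `|S|` of them prescribed, so there are
`((n - |S|)!)^(s-1)` assignments agreeing with `f` on `S`; this is the upper bound. An assignment
agreeing with `f` on `S` but not exactly on `S` agrees with it on `insert i S` for some `i ∉ S`,
and the union bound over these `n - |S|` choices of `i` gives the lower bound.
-/

open Function Finset Equiv
open scoped Nat

section Injections
variable {α : Type*} [Fintype α] [DecidableEq α]

theorem card_perm_fixing_finset (S : Finset α) :
    Nat.card {π : Perm α // ∀ a ∈ S, π a = a} = (Fintype.card α - #S)! := by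
  calc Nat.card {π : Perm α // ∀ a ∈ S, π a = a}
      = Nat.card (Perm {a // a ∉ S}) :=
        Nat.card_congr ((subtypeEquivRight (by simp)).trans (Perm.subtypeEquivSubtypePerm _).symm)
    _ = (Fintype.card α - #S)! := by
        rw [Nat.card_perm, Nat.card_eq_fintype_card, Fintype.card_subtype_compl,
          Fintype.card_coe]

theorem card_injective_eqOn (S : Finset α) {c : α → α} (hc : Injective c) :
    Nat.card {g : α → α // Injective g ∧ ∀ a ∈ S, g a = c a} = (Fintype.card α - #S)! := by
  let σ : Perm α := Equiv.ofBijective c hc.bijective_of_finite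
  rw [← card_perm_fixing_finset S]
  refine Nat.card_congr
    { toFun := fun g => ⟨(Equiv.ofBijective g.1 g.2.1.bijective_of_finite).trans σ.symm,
        fun a ha => by simp [σ, g.2.2 a ha]⟩
      invFun := fun π => ⟨σ ∘ π, σ.injective.comp π.1.injective,
        fun a ha => by simp [π.2 a ha, σ]⟩
      left_inv := fun g => Subtype.ext (funext fun a => σ.apply_symm_apply (g.1 a))
      right_inv := fun π => by ext; simp [σ] }

end Injections

theorem Fin.prod_ite_val_eq_zero {M : Type*} [CommMonoid M] (s : ℕ) (m : M) :
    ∏ j : Fin s, (if (j : ℕ) = 0 then 1 else m) = m ^ (s - 1) := by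
  cases s with
  | zero => simp
  | succ t => simp [Fin.prod_univ_succ]

section Assignments
variable {α : Type*} [Fintype α] [DecidableEq α] {s : ℕ}

-- The paper's `P(k)` is `agreeingOn f {i | i < k}`, and `h(n,k)` counts `agreeingExactlyOn`.
def agreeingOn (f : α → Fin s → α) (S : Finset α) : Set (α → Fin s → α) :=
  {e | (∀ i (j : Fin s), (j : ℕ) = 0 → e i j = i) ∧ (∀ j, Injective fun i => e i j) ∧
    ∀ i ∈ S, e i = f i}

theorem ncard_agreeingOn {f : α → Fin s → α}
    (hf1 : ∀ i (j : Fin s), (j : ℕ) = 0 → f i j = i) (hf2 : ∀ j, Injective fun i => f i j)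
    (S : Finset α) :
    (agreeingOn f S).ncard = (Fintype.card α - #S)! ^ (s - 1) := by
  let C : Fin s → (α → α) → Prop := fun j g =>
    ((j : ℕ) = 0 → g = id) ∧ Injective g ∧ ∀ i ∈ S, g i = f i j
  have hmem : ∀ e, e ∈ agreeingOn f S ↔ ∀ j, C j fun i => e i j := by
    intro e
    simp only [agreeingOn, Set.mem_ofPred_eq, C, funext_iff, id]
    grind
  have hcol : ∀ j, Nat.card {g // C j g} =
      if (j : ℕ) = 0 then 1 else (Fintype.card α - #S)! := by
    intro j
    split_ifs with hj
    · have hC : ∀ g, C j g ↔ g = id := fun g => by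
        constructor
        · exact fun h => h.1 hj
        · rintro rfl
          exact ⟨fun _ => rfl, injective_id, fun i _ => (hf1 i j hj).symm⟩
      rw [Nat.card_congr (subtypeEquivRight hC), Nat.card_unique]
    · rw [← card_injective_eqOn S (hf2 j)]
      exact Nat.card_congr (subtypeEquivRight fun g => by simp [C, hj])
  calc (agreeingOn f S).ncard
      = Nat.card (∀ j, {g // C j g}) :=
        (Nat.card_coe_set_eq _).symm.trans
          (Nat.card_congr ((Equiv.piComm _).subtypeEquiv (hmem ·) |>.trans (subtypePiEquivPi)))
    _ = (Fintype.card α - #S)! ^ (s - 1) := by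
        rw [Nat.card_pi, Finset.prod_congr rfl fun j _ => hcol j, Fin.prod_ite_val_eq_zero]

def agreeingExactlyOn (f : α → Fin s → α) (S : Finset α) : Set (α → Fin s → α) :=
  {e ∈ agreeingOn f S | ∀ i ∉ S, e i ≠ f i}

theorem agreeingOn_subset_union (f : α → Fin s → α) (S : Finset α) :
    agreeingOn f S ⊆ agreeingExactlyOn f S ∪ ⋃ i ∈ Sᶜ, agreeingOn f (insert i S) := by
  intro e he
  by_cases h : ∀ i ∉ S, e i ≠ f i
  · exact Or.inl ⟨he, h⟩
  · push Not at h
    obtain ⟨i, hiS, hi⟩ := h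
    refine Or.inr (Set.mem_biUnion (mem_compl.2 hiS) ⟨he.1, he.2.1, fun a ha => ?_⟩)
    rcases mem_insert.1 ha with rfl | ha
    exacts [hi, he.2.2 a ha]

theorem ncard_agreeingOn_le {f : α → Fin s → α}
    (hf1 : ∀ i (j : Fin s), (j : ℕ) = 0 → f i j = i) (hf2 : ∀ j, Injective fun i => f i j)
    (S : Finset α) :
    (agreeingOn f S).ncard ≤
      (agreeingExactlyOn f S).ncard + #Sᶜ * (Fintype.card α - #S - 1)! ^ (s - 1) := by
  have hinsert : ∀ i ∈ Sᶜ,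
      (agreeingOn f (insert i S)).ncard = (Fintype.card α - #S - 1)! ^ (s - 1) := by
    intro i hi
    rw [ncard_agreeingOn hf1 hf2, card_insert_of_notMem (mem_compl.1 hi), Nat.sub_sub]
  calc (agreeingOn f S).ncard
      ≤ (agreeingExactlyOn f S ∪ ⋃ i ∈ Sᶜ, agreeingOn f (insert i S)).ncard :=
        Set.ncard_le_ncard (agreeingOn_subset_union f S)
    _ ≤ (agreeingExactlyOn f S).ncard + ∑ i ∈ Sᶜ, (agreeingOn f (insert i S)).ncard :=
        (Set.ncard_union_le _ _).trans (Nat.add_le_add_left (Sᶜ.set_ncard_biUnion_le _) _)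
    _ = _ := by rw [sum_congr rfl hinsert, sum_const, smul_eq_mul]

end Assignments

theorem hSet_eq_agreeingExactlyOn (n s k : ℕ) (f : Fin n → Fin s → Fin n) :
    hSet n s k f = agreeingExactlyOn f {i | (i : ℕ) < k} := by
  ext e
  simp [hSet, agreeingExactlyOn, agreeingOn, and_assoc]

theorem hnk_bounds_general (n s k : ℕ) (hk : k ≤ n)
    (f : Fin n → Fin s → Fin n)
    (hf1 : ∀ i : Fin n, ∀ j : Fin s, (j : ℕ) = 0 → f i j = i)
    (hf2 : ∀ j : Fin s, Function.Injective (fun i => f i j)) :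
    Nat.card ↥(hSet n s k f) ≤ Nat.factorial (n - k) ^ (s - 1) ∧
    (Nat.factorial (n - k) : ℤ) ^ (s - 1) -
        ((n : ℤ) - (k : ℤ)) * (Nat.factorial (n - k - 1) : ℤ) ^ (s - 1) ≤
      (Nat.card ↥(hSet n s k f) : ℤ) := by
  set S : Finset (Fin n) := {i | (i : ℕ) < k}
  have hS : #S = k := by simp [S, Fin.card_filter_val_lt, hk]
  have hP := ncard_agreeingOn hf1 hf2 S
  have hlower := ncard_agreeingOn_le hf1 hf2 S
  simp only [card_compl, hS, Fintype.card_fin] at hP hlower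
  rw [hSet_eq_agreeingExactlyOn, Nat.card_coe_set_eq]
  refine ⟨hP ▸ Set.ncard_le_ncard (Set.sep_subset _ _), ?_⟩
  rw [← Nat.cast_sub hk]
  linarith

/-- Bounds on `h(n,k)`:
`((n-k)!)^(s-1) - (n-k)((n-k-1)!)^(s-1) ≤ h(n,k) ≤ ((n-k)!)^(s-1)`. -/
theorem hnk_bounds (n s k : ℕ) (hn : 1 ≤ n) (hs : 2 ≤ s) (hk : k ≤ n)
    (f : Fin n → Fin s → Fin n)
    (hf1 : ∀ i : Fin n, ∀ j : Fin s, (j : ℕ) = 0 → f i j = i)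
    (hf2 : ∀ j : Fin s, Function.Injective (fun i => f i j)) :
    Nat.card ↥(hSet n s k f) ≤ Nat.factorial (n - k) ^ (s - 1) ∧
    (Nat.factorial (n - k) : ℤ) ^ (s - 1) -
        ((n : ℤ) - (k : ℤ)) * (Nat.factorial (n - k - 1) : ℤ) ^ (s - 1) ≤
      (Nat.card ↥(hSet n s k f) : ℤ) :=
  hnk_bounds_general n s k hk f hf1 hf2
end
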